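/- arXiv:0811.4623 — 2 statements merged into one kernel-verified Lean document; each statement's English description precedes it below -/
import Mathlib

section
/- Fix α > 0. For r > 0 and x ∈ ℝ² define J_r(x) := ∫_{−r}^{r} [ ‖(r,s) − x‖_∞^{−2−α} + ‖(−r,s) − x‖_∞^{−2−α} + ‖(s,r) − x‖_∞^{−2−α} + ‖(s,−r) − x‖_∞^{−2−α} ] ds, the arc-length integral of z ↦ ‖z − x‖_∞^{−2−α} over the square { z ∈ ℝ² : ‖z‖_∞ = r }. Then for all r > 0 and all x ∈ ℝ² with ‖x‖_∞ > r, (1+α)^{−1}·r/(‖x‖_∞·(‖x‖_∞ − r)^{1+α}) ≤ J_r(x) ≤ 12·r/(‖x‖_∞·(‖x‖_∞ − r)^{1+α}). -/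
/-- `J_r(x)`: arc-length integral of `z ↦ ‖z − x‖_∞^{−2−α}` over the square `‖z‖_∞ = r`,
written as a sum of four edge integrals.  The norm on `ℝ × ℝ` is the sup norm. -/
noncomputable def Jsq (α : ℝ) (r : ℝ) (x : ℝ × ℝ) : ℝ :=
  ∫ s in (-r)..r,
    (‖((r, s) : ℝ × ℝ) - x‖ ^ (-(2 + α)) + ‖((-r, s) : ℝ × ℝ) - x‖ ^ (-(2 + α)) +
     ‖((s, r) : ℝ × ℝ) - x‖ ^ (-(2 + α)) + ‖((s, -r) : ℝ × ℝ) - x‖ ^ (-(2 + α)))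

open MeasureTheory intervalIntegral Set

namespace JsqProof

lemma rpow_anti {x y c : ℝ} (hx : 0 < x) (hxy : x ≤ y) (hc : c ≤ 0) : y ^ c ≤ x ^ c :=
  Real.rpow_le_rpow_of_nonpos hx hxy hc

lemma rpow_shift {x : ℝ} (hx : 0 < x) (α : ℝ) : x * x ^ (-(2+α)) = x ^ (-(1+α)) := by
  rw [show (-(1+α)) = 1 + (-(2+α)) by ring, Real.rpow_add hx, Real.rpow_one]

lemma norm_pair (p q : ℝ) : ‖((p, q) : ℝ × ℝ)‖ = max |p| |q| := by
  simp [Prod.norm_def, Real.norm_eq_abs]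

/-- primitive of `t ^ (-(2+α))` -/
lemma prim {α : ℝ} (hα : 0 < α) {u v : ℝ} (hu : 0 < u) (huv : u ≤ v) :
    ∫ t in u..v, t ^ (-(2+α)) = (u ^ (-(1+α)) - v ^ (-(1+α))) / (1+α) := by
  rw [integral_rpow (Or.inr ⟨by intro h; linarith [h], by
      rw [Set.uIcc_of_le huv, Set.mem_Icc]; push_neg; intro h; linarith⟩)]
  rw [show (-(2+α) + 1) = -(1+α) by ring]
  rw [div_neg, ← neg_div, neg_sub]

lemma prim_le {α : ℝ} (hα : 0 < α) {u v : ℝ} (hu : 0 < u) (huv : u ≤ v) :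
    ∫ t in u..v, t ^ (-(2+α)) ≤ u ^ (-(1+α)) := by
  rw [prim hα hu huv]
  have h1 : 0 ≤ v ^ (-(1+α)) := Real.rpow_nonneg (by linarith) _
  have h2 : 0 ≤ u ^ (-(1+α)) := Real.rpow_nonneg hu.le _
  rw [div_le_iff₀ (by positivity : (0:ℝ) < 1 + α)]
  nlinarith

lemma cont_max_abs {d e : ℝ} (hd : 0 < d) :
    Continuous fun t : ℝ => (max d |t|) ^ e := by
  apply Continuous.rpow_const (continuous_const.max continuous_abs)
  intro t
  exact Or.inl (lt_of_lt_of_le hd (le_max_left _ _)).ne'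

/-- main upper estimate for the near-edge integral -/
lemma M0 {α : ℝ} (hα : 0 < α) {d L : ℝ} (hd : 0 < d) (hL : 0 ≤ L) :
    ∫ t in (-L)..L, (max d |t|) ^ (-(2+α)) ≤ 4 * d ^ (-(1+α)) := by
  have hcont : Continuous fun t : ℝ => (max d |t|) ^ (-(2+α)) := cont_max_abs hd
  have hD0 : 0 ≤ d ^ (-(1+α)) := Real.rpow_nonneg hd.le _
  have key2 : ∀ p q : ℝ, p ≤ q → q - p ≤ 2*d →
      (∫ t in p..q, (max d |t|) ^ (-(2+α))) ≤ 2 * d ^ (-(1+α)) := by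
    intro p q hpq hlen
    have h1 : (∫ t in p..q, (max d |t|) ^ (-(2+α))) ≤ ∫ _t in p..q, d ^ (-(2+α)) := by
      apply integral_mono_on hpq (hcont.intervalIntegrable _ _) intervalIntegrable_const
      intro t _
      exact rpow_anti hd (le_max_left _ _) (by linarith)
    rw [intervalIntegral.integral_const, smul_eq_mul] at h1
    have hE0 : 0 ≤ d ^ (-(2+α)) := Real.rpow_nonneg hd.le _
    have hshift := rpow_shift hd α
    nlinarith [mul_le_mul_of_nonneg_right hlen hE0]
  have tail : ∀ L', d ≤ L' → (∫ t in d..L', (max d |t|) ^ (-(2+α))) ≤ d ^ (-(1+α)) := by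
    intro L' hdL
    have heq : (∫ t in d..L', (max d |t|) ^ (-(2+α))) = ∫ t in d..L', t ^ (-(2+α)) := by
      apply integral_congr
      intro t ht
      rw [Set.uIcc_of_le hdL, Set.mem_Icc] at ht
      show (max d |t|) ^ (-(2+α)) = t ^ (-(2+α))
      rw [abs_of_nonneg (by linarith : 0 ≤ t), max_eq_right ht.1]
    rw [heq]
    exact prim_le hα hd hdL
  by_cases hLd : L ≤ d
  · have := key2 (-L) L (by linarith) (by linarith)
    linarith
  · push_neg at hLd
    have i1 : IntervalIntegrable (fun t => (max d |t|) ^ (-(2+α))) volume (-L) (-d) :=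
      hcont.intervalIntegrable _ _
    have i2 : IntervalIntegrable (fun t => (max d |t|) ^ (-(2+α))) volume (-d) d :=
      hcont.intervalIntegrable _ _
    have i3 : IntervalIntegrable (fun t => (max d |t|) ^ (-(2+α))) volume d L :=
      hcont.intervalIntegrable _ _
    have e2 : (∫ t in (-d)..d, (max d |t|) ^ (-(2+α)))
        + (∫ t in d..L, (max d |t|) ^ (-(2+α)))
        = ∫ t in (-d)..L, (max d |t|) ^ (-(2+α)) :=
      integral_add_adjacent_intervals i2 i3
    have e1 : (∫ t in (-L)..(-d), (max d |t|) ^ (-(2+α)))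
        + (∫ t in (-d)..L, (max d |t|) ^ (-(2+α)))
        = ∫ t in (-L)..L, (max d |t|) ^ (-(2+α)) :=
      integral_add_adjacent_intervals i1 (i2.trans i3)
    have p1 : (∫ t in (-L)..(-d), (max d |t|) ^ (-(2+α))) ≤ d ^ (-(1+α)) := by
      have hcn : (∫ t in d..L, (fun t => (max d |t|) ^ (-(2+α))) (-t))
          = ∫ t in (-L)..(-d), (max d |t|) ^ (-(2+α)) :=
        integral_comp_neg (fun t => (max d |t|) ^ (-(2+α)))
      rw [← hcn]
      simp only [abs_neg]
      exact tail L hLd.le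
    have p2 : (∫ t in (-d)..d, (max d |t|) ^ (-(2+α))) ≤ 2 * d ^ (-(1+α)) :=
      key2 (-d) d (by linarith) (by linarith)
    have p3 : (∫ t in d..L, (max d |t|) ^ (-(2+α))) ≤ d ^ (-(1+α)) := tail L hLd.le
    linarith

lemma edge_integrable {α : ℝ} (r : ℝ) (x : ℝ × ℝ) (hr : 0 < r) (hx : r < ‖x‖)
    {v : ℝ → ℝ × ℝ} (hv : Continuous v) (hvr : ∀ s ∈ Set.Icc (-r) r, ‖v s‖ ≤ r) :
    IntervalIntegrable (fun s => ‖v s - x‖ ^ (-(2+α))) volume (-r) r := by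
  apply ContinuousOn.intervalIntegrable
  apply ContinuousOn.rpow_const ((hv.sub continuous_const).norm).continuousOn
  intro s hs
  rw [Set.uIcc_of_le (by linarith : -r ≤ r)] at hs
  have h1 := hvr s hs
  have h2 : ‖x‖ - ‖v s‖ ≤ ‖v s - x‖ := by
    rw [norm_sub_rev]; exact norm_sub_norm_le _ _
  exact Or.inl (by linarith : (0:ℝ) < ‖v s - x‖).ne'

lemma I1_le {α : ℝ} (hα : 0 < α) {d r b : ℝ} (hd : 0 < d) (hr : 0 < r) (hb : 0 ≤ b) :
    ∫ s in (-r)..r, (max d |s - b|) ^ (-(2+α)) ≤ 4 * d ^ (-(1+α)) := by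
  have hcomp : (∫ s in (-r)..r, (max d |s - b|) ^ (-(2+α)))
      = ∫ t in (-r - b)..(r - b), (max d |t|) ^ (-(2+α)) :=
    integral_comp_sub_right (fun t => (max d |t|) ^ (-(2+α))) b
  rw [hcomp]
  have h2 : (∫ t in (-r - b)..(r - b), (max d |t|) ^ (-(2+α)))
      ≤ ∫ t in (-(r+b))..(r+b), (max d |t|) ^ (-(2+α)) := by
    apply integral_mono_interval (by linarith) (by linarith) (by linarith)
    · exact ae_of_all _ fun t => Real.rpow_nonneg (le_trans hd.le (le_max_left _ _)) _
    · exact (cont_max_abs hd).intervalIntegrable _ _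
  exact h2.trans (M0 hα hd (by linarith))

lemma Jsq_split {α : ℝ} (r : ℝ) (x : ℝ × ℝ) (hr : 0 < r) (hx : r < ‖x‖) :
    Jsq α r x = (∫ s in (-r)..r, ‖((r, s) : ℝ × ℝ) - x‖ ^ (-(2 + α)))
      + (∫ s in (-r)..r, ‖((-r, s) : ℝ × ℝ) - x‖ ^ (-(2 + α)))
      + (∫ s in (-r)..r, ‖((s, r) : ℝ × ℝ) - x‖ ^ (-(2 + α)))
      + (∫ s in (-r)..r, ‖((s, -r) : ℝ × ℝ) - x‖ ^ (-(2 + α))) := by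
  have h1 : IntervalIntegrable (fun s => ‖((r, s) : ℝ × ℝ) - x‖ ^ (-(2 + α))) volume (-r) r :=
    edge_integrable r x hr hx (continuous_const.prodMk continuous_id) (fun s hs => by
      rw [norm_pair, abs_of_pos hr, Set.mem_Icc] at *
      exact max_le le_rfl (abs_le.2 ⟨hs.1, hs.2⟩))
  have h2 : IntervalIntegrable (fun s => ‖((-r, s) : ℝ × ℝ) - x‖ ^ (-(2 + α))) volume (-r) r :=
    edge_integrable r x hr hx (continuous_const.prodMk continuous_id) (fun s hs => by
      rw [norm_pair, abs_neg, abs_of_pos hr, Set.mem_Icc] at *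
      exact max_le le_rfl (abs_le.2 ⟨hs.1, hs.2⟩))
  have h3 : IntervalIntegrable (fun s => ‖((s, r) : ℝ × ℝ) - x‖ ^ (-(2 + α))) volume (-r) r :=
    edge_integrable r x hr hx (continuous_id.prodMk continuous_const) (fun s hs => by
      rw [norm_pair, abs_of_pos hr, Set.mem_Icc] at *
      exact max_le (abs_le.2 ⟨hs.1, hs.2⟩) le_rfl)
  have h4 : IntervalIntegrable (fun s => ‖((s, -r) : ℝ × ℝ) - x‖ ^ (-(2 + α))) volume (-r) r :=
    edge_integrable r x hr hx (continuous_id.prodMk continuous_const) (fun s hs => by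
      rw [norm_pair, abs_neg, abs_of_pos hr, Set.mem_Icc] at *
      exact max_le (abs_le.2 ⟨hs.1, hs.2⟩) le_rfl)
  unfold Jsq
  rw [integral_add ((h1.add h2).add h3) h4, integral_add (h1.add h2) h3, integral_add h1 h2]

lemma Jsq_swap (α r p q : ℝ) : Jsq α r (q, p) = Jsq α r (p, q) := by
  unfold Jsq
  apply integral_congr
  intro s _
  show ‖((r, s) : ℝ × ℝ) - (q, p)‖ ^ (-(2 + α)) + ‖((-r, s) : ℝ × ℝ) - (q, p)‖ ^ (-(2 + α))
      + ‖((s, r) : ℝ × ℝ) - (q, p)‖ ^ (-(2 + α)) + ‖((s, -r) : ℝ × ℝ) - (q, p)‖ ^ (-(2 + α))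
    = ‖((r, s) : ℝ × ℝ) - (p, q)‖ ^ (-(2 + α)) + ‖((-r, s) : ℝ × ℝ) - (p, q)‖ ^ (-(2 + α))
      + ‖((s, r) : ℝ × ℝ) - (p, q)‖ ^ (-(2 + α)) + ‖((s, -r) : ℝ × ℝ) - (p, q)‖ ^ (-(2 + α))
  simp only [Prod.mk_sub_mk, norm_pair]
  rw [max_comm |r - q| |s - p|, max_comm |(-r) - q| |s - p|,
    max_comm |s - q| |r - p|, max_comm |s - q| |(-r) - p|]
  ring

lemma Jsq_negsnd (α r p q : ℝ) (hr : 0 < r) (hx : r < ‖((p, q) : ℝ × ℝ)‖) :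
    Jsq α r (p, -q) = Jsq α r (p, q) := by
  have hx' : r < ‖((p, -q) : ℝ × ℝ)‖ := by
    rw [norm_pair, abs_neg]; rwa [norm_pair] at hx
  rw [Jsq_split r (p, -q) hr hx', Jsq_split r (p, q) hr hx]
  have e1 : ∀ w : ℝ, (∫ s in (-r)..r, ‖((w, s) : ℝ × ℝ) - (p, -q)‖ ^ (-(2 + α)))
      = ∫ s in (-r)..r, ‖((w, s) : ℝ × ℝ) - (p, q)‖ ^ (-(2 + α)) := by
    intro w
    have hc : (∫ s in (-r)..r, (fun u => ‖((w, u) : ℝ × ℝ) - (p, q)‖ ^ (-(2 + α))) (-s))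
        = ∫ s in (-r)..r, ‖((w, s) : ℝ × ℝ) - (p, q)‖ ^ (-(2 + α)) := by
      rw [integral_comp_neg (fun u => ‖((w, u) : ℝ × ℝ) - (p, q)‖ ^ (-(2 + α))), neg_neg]
    rw [← hc]
    apply integral_congr; intro s _
    show ‖((w, s) : ℝ × ℝ) - (p, -q)‖ ^ (-(2 + α)) = ‖((w, -s) : ℝ × ℝ) - (p, q)‖ ^ (-(2 + α))
    rw [Prod.mk_sub_mk, Prod.mk_sub_mk, norm_pair, norm_pair,
      show s - -q = -(-s - q) by ring, abs_neg]
  have e3 : (∫ s in (-r)..r, ‖((s, r) : ℝ × ℝ) - (p, -q)‖ ^ (-(2 + α)))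
      = ∫ s in (-r)..r, ‖((s, -r) : ℝ × ℝ) - (p, q)‖ ^ (-(2 + α)) := by
    apply integral_congr; intro s _
    show ‖((s, r) : ℝ × ℝ) - (p, -q)‖ ^ (-(2 + α)) = ‖((s, -r) : ℝ × ℝ) - (p, q)‖ ^ (-(2 + α))
    rw [Prod.mk_sub_mk, Prod.mk_sub_mk, norm_pair, norm_pair,
      show r - -q = -(-r - q) by ring, abs_neg]
  have e4 : (∫ s in (-r)..r, ‖((s, -r) : ℝ × ℝ) - (p, -q)‖ ^ (-(2 + α)))
      = ∫ s in (-r)..r, ‖((s, r) : ℝ × ℝ) - (p, q)‖ ^ (-(2 + α)) := by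
    apply integral_congr; intro s _
    show ‖((s, -r) : ℝ × ℝ) - (p, -q)‖ ^ (-(2 + α)) = ‖((s, r) : ℝ × ℝ) - (p, q)‖ ^ (-(2 + α))
    rw [Prod.mk_sub_mk, Prod.mk_sub_mk, norm_pair, norm_pair,
      show -r - -q = -(r - q) by ring, abs_neg]
  rw [e1 r, e1 (-r), e3, e4]
  ring

lemma Jsq_negfst (α r p q : ℝ) (hr : 0 < r) (hx : r < ‖((p, q) : ℝ × ℝ)‖) :
    Jsq α r (-p, q) = Jsq α r (p, q) := by
  have hx2 : r < ‖((q, p) : ℝ × ℝ)‖ := by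
    rw [norm_pair, max_comm]; rwa [norm_pair] at hx
  rw [← Jsq_swap α r (-p) q, Jsq_negsnd α r q p hr hx2]
  exact Jsq_swap α r p q

lemma Jsq_abs (α r p q : ℝ) (hr : 0 < r) (hx : r < ‖((p, q) : ℝ × ℝ)‖) :
    Jsq α r (p, q) = Jsq α r (|p|, |q|) := by
  have h2 : Jsq α r (p, q) = Jsq α r (p, |q|) := by
    rcases le_or_gt 0 q with h | h
    · rw [abs_of_nonneg h]
    · rw [abs_of_neg h]; exact (Jsq_negsnd α r p q hr hx).symm
  have hx2 : r < ‖((p, |q|) : ℝ × ℝ)‖ := by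
    rw [norm_pair, abs_abs]; rwa [norm_pair] at hx
  have h1 : Jsq α r (p, |q|) = Jsq α r (|p|, |q|) := by
    rcases le_or_gt 0 p with h | h
    · rw [abs_of_nonneg h]
    · rw [abs_of_neg h]; exact (Jsq_negfst α r p |q| hr hx2).symm
  rw [h2, h1]

lemma lower_frac {α : ℝ} (hα : 0 < α) {a r c : ℝ} (hr : 0 < r) (hra : r < a) (hac : a ≤ c) :
    (1 + α)⁻¹ * (r / (a * (a - r) ^ (1 + α)))
      ≤ ((a - r) ^ (-(1+α)) - c ^ (-(1+α))) / (1 + α) := by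
  have ha : 0 < a := hr.trans hra
  have hd : 0 < a - r := by linarith
  have hc : 0 < c := lt_of_lt_of_le ha hac
  have k1 : c * c ^ (-(1+α)) = c ^ (-α) := by
    rw [show (-α) = 1 + -(1+α) by ring, Real.rpow_add hc, Real.rpow_one]
  have k2 : (a - r) * (a - r) ^ (-(1+α)) = (a - r) ^ (-α) := by
    rw [show (-α) = 1 + -(1+α) by ring, Real.rpow_add hd, Real.rpow_one]
  have k3 : c ^ (-α) ≤ (a - r) ^ (-α) := rpow_anti hd (by linarith) (by linarith)
  have hX0 : 0 ≤ c ^ (-(1+α)) := Real.rpow_nonneg hc.le _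
  have k4 : a * c ^ (-(1+α)) ≤ (a - r) * (a - r) ^ (-(1+α)) := by nlinarith
  have hrw : r / (a * (a - r) ^ (1 + α)) = r / a * (a - r) ^ (-(1+α)) := by
    rw [Real.rpow_neg hd.le, div_mul_eq_div_div, div_eq_mul_inv]
  have h1α : (0:ℝ) < 1 + α := by linarith
  have key : r / a * (a - r) ^ (-(1+α)) ≤ (a - r) ^ (-(1+α)) - c ^ (-(1+α)) := by
    rw [div_mul_eq_mul_div, div_le_iff₀ ha]
    nlinarith [k4]
  rw [hrw, inv_mul_eq_div, div_le_div_iff₀ h1α h1α]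
  nlinarith [key]

lemma upper_arith {a r A1 A2 A3 A4 E D Y : ℝ} (hr : 0 < r) (hra : r < a)
    (hE : (a - r) * E = D) (hE0 : 0 ≤ E) (hD0 : 0 ≤ D)
    (h1a : A1 ≤ 2 * r * E) (h1b : A1 ≤ 4 * D)
    (hA2 : A2 = 2 * r * Y) (h2 : a * (2 * r * Y) ≤ 2 * r * D)
    (h3a : A3 ≤ 2 * r * E) (h3b : A3 ≤ D)
    (h4a : A4 ≤ 2 * r * E) (h4b : A4 ≤ D) :
    (A1 + A2 + A3 + A4) * a ≤ 12 * r * D := by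
  have ha : 0 < a := hr.trans hra
  subst hA2
  have hED : r * ((a - r) * E) = r * D := by rw [hE]
  have hAD : a * ((a - r) * E) = a * D := by rw [hE]
  rcases le_total (3 * r) a with h3 | h3
  · have q1 := mul_le_mul_of_nonneg_right h1a ha.le
    have q3 := mul_le_mul_of_nonneg_right h3a ha.le
    have q4 := mul_le_mul_of_nonneg_right h4a ha.le
    have hint : 0 ≤ (10 * (a - r) - 6 * a) * r * E :=
      mul_nonneg (mul_nonneg (by linarith) hr.le) hE0
    nlinarith [q1, q3, q4, h2, hED, hint]
  · rcases le_total (3 * r) (2 * a) with h32 | h32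
    · have q1 := mul_le_mul_of_nonneg_right h1a ha.le
      have q3 := mul_le_mul_of_nonneg_right h3b ha.le
      have q4 := mul_le_mul_of_nonneg_right h4b ha.le
      have hint : 0 ≤ (3 * r - a) * (2 * a - 3 * r) * E :=
        mul_nonneg (mul_nonneg (by linarith) (by linarith)) hE0
      have hint2 : 0 ≤ r * (a - r) * E := mul_nonneg (mul_nonneg hr.le (by linarith)) hE0
      nlinarith [q1, q3, q4, h2, hED, hAD, hint, hint2]
    · have q1 := mul_le_mul_of_nonneg_right h1b ha.le
      have q3 := mul_le_mul_of_nonneg_right h3b ha.le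
      have q4 := mul_le_mul_of_nonneg_right h4b ha.le
      have hint : 0 ≤ (10 * r - 6 * a) * D := mul_nonneg (by linarith) hD0
      nlinarith [q1, q3, q4, h2, hint]

lemma core {α : ℝ} (hα : 0 < α) {r b a : ℝ} (hr : 0 < r) (hb0 : 0 ≤ b) (hba : b ≤ a)
    (hra : r < a) :
    (1 + α)⁻¹ * (r / (a * (a - r) ^ (1 + α))) ≤ Jsq α r (a, b) ∧
    Jsq α r (a, b) ≤ 12 * (r / (a * (a - r) ^ (1 + α))) := by
  have ha : 0 < a := hr.trans hra
  have hd : 0 < a - r := by linarith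
  have he0 : (-(2+α)) ≤ 0 := by linarith
  have hx : r < ‖((a, b) : ℝ × ℝ)‖ := by
    rw [norm_pair, abs_of_pos ha]
    exact lt_of_lt_of_le hra (le_max_left _ _)
  have hsplit := Jsq_split (α := α) r (a, b) hr hx
  have hI1 : (∫ s in (-r)..r, ‖((r, s) : ℝ × ℝ) - (a, b)‖ ^ (-(2 + α)))
      = ∫ s in (-r)..r, (max (a - r) |s - b|) ^ (-(2+α)) := by
    apply integral_congr; intro s _
    show ‖((r, s) : ℝ × ℝ) - (a, b)‖ ^ (-(2 + α)) = (max (a - r) |s - b|) ^ (-(2+α))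
    rw [Prod.mk_sub_mk, norm_pair,
      show |r - a| = a - r from by rw [abs_sub_comm, abs_of_nonneg (by linarith)]]
  have hI2 : (∫ s in (-r)..r, ‖((-r, s) : ℝ × ℝ) - (a, b)‖ ^ (-(2 + α)))
      = ∫ s in (-r)..r, (a + r) ^ (-(2+α)) := by
    apply integral_congr; intro s hs
    rw [Set.uIcc_of_le (by linarith : -r ≤ r), Set.mem_Icc] at hs
    show ‖((-r, s) : ℝ × ℝ) - (a, b)‖ ^ (-(2 + α)) = (a + r) ^ (-(2+α))
    rw [Prod.mk_sub_mk, norm_pair,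
      show |(-r) - a| = a + r from by
        rw [show (-r : ℝ) - a = -(a + r) by ring, abs_neg,
          abs_of_nonneg (by linarith : (0:ℝ) ≤ a + r)],
      max_eq_left (abs_le.2 ⟨by linarith, by linarith⟩)]
  have hI3 : (∫ s in (-r)..r, ‖((s, r) : ℝ × ℝ) - (a, b)‖ ^ (-(2 + α)))
      = ∫ s in (-r)..r, (max (a - s) |r - b|) ^ (-(2+α)) := by
    apply integral_congr; intro s hs
    rw [Set.uIcc_of_le (by linarith : -r ≤ r), Set.mem_Icc] at hs
    show ‖((s, r) : ℝ × ℝ) - (a, b)‖ ^ (-(2 + α)) = (max (a - s) |r - b|) ^ (-(2+α))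
    rw [Prod.mk_sub_mk, norm_pair,
      show |s - a| = a - s from by rw [abs_sub_comm, abs_of_nonneg (by linarith)]]
  have hI4 : (∫ s in (-r)..r, ‖((s, -r) : ℝ × ℝ) - (a, b)‖ ^ (-(2 + α)))
      = ∫ s in (-r)..r, (max (a - s) (r + b)) ^ (-(2+α)) := by
    apply integral_congr; intro s hs
    rw [Set.uIcc_of_le (by linarith : -r ≤ r), Set.mem_Icc] at hs
    show ‖((s, -r) : ℝ × ℝ) - (a, b)‖ ^ (-(2 + α)) = (max (a - s) (r + b)) ^ (-(2+α))
    rw [Prod.mk_sub_mk, norm_pair,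
      show |s - a| = a - s from by rw [abs_sub_comm, abs_of_nonneg (by linarith)],
      show |(-r) - b| = r + b from by
        rw [show (-r : ℝ) - b = -(r + b) by ring, abs_neg,
          abs_of_nonneg (by linarith : (0:ℝ) ≤ r + b)]]
  rw [hI1, hI2, hI3, hI4] at hsplit
  -- integrability facts
  have int1 : IntervalIntegrable (fun s => (max (a - r) |s - b|) ^ (-(2+α))) volume (-r) r := by
    have hco : Continuous fun s : ℝ => (max (a - r) |s - b|) ^ (-(2+α)) := by
      apply Continuous.rpow_const
        (continuous_const.max ((continuous_id.sub continuous_const).abs))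
      exact fun s => Or.inl (lt_of_lt_of_le hd (le_max_left _ _)).ne'
    exact hco.intervalIntegrable _ _
  have int3 : ∀ w : ℝ,
      IntervalIntegrable (fun s => (max (a - s) w) ^ (-(2+α))) volume (-r) r := by
    intro w
    apply ContinuousOn.intervalIntegrable
    apply ContinuousOn.rpow_const
      ((continuous_const.sub continuous_id).max continuous_const).continuousOn
    intro s hs
    rw [Set.uIcc_of_le (by linarith : -r ≤ r), Set.mem_Icc] at hs
    exact Or.inl (lt_of_lt_of_le (by linarith : (0:ℝ) < a - s) (le_max_left _ _)).ne'
  have intA : IntervalIntegrable (fun s => (a - s) ^ (-(2+α))) volume (-r) r := by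
    apply ContinuousOn.intervalIntegrable
    apply ContinuousOn.rpow_const (continuous_const.sub continuous_id).continuousOn
    intro s hs
    rw [Set.uIcc_of_le (by linarith : -r ≤ r), Set.mem_Icc] at hs
    exact Or.inl (by linarith : (0:ℝ) < a - s).ne'
  -- value of the (a-s) integral
  have hIa : (∫ s in (-r)..r, (a - s) ^ (-(2+α)))
      = ((a - r) ^ (-(1+α)) - (a + r) ^ (-(1+α))) / (1 + α) := by
    have hc := integral_comp_sub_left (a := -r) (b := r) (fun u : ℝ => u ^ (-(2+α))) a
    rw [show a - -r = a + r by ring] at hc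
    exact hc.trans (prim hα hd (by linarith))
  have hIaD : (∫ s in (-r)..r, (a - s) ^ (-(2+α))) ≤ (a - r) ^ (-(1+α)) := by
    rw [hIa]
    have h1 : 0 ≤ (a + r) ^ (-(1+α)) := Real.rpow_nonneg (by linarith) _
    have h2 : 0 ≤ (a - r) ^ (-(1+α)) := Real.rpow_nonneg hd.le _
    rw [div_le_iff₀ (by positivity : (0:ℝ) < 1 + α)]
    nlinarith
  have const_bound : ∀ f : ℝ → ℝ, IntervalIntegrable f volume (-r) r →
      (∀ s ∈ Set.Icc (-r) r, f s ≤ (a - r) ^ (-(2+α))) →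
      (∫ s in (-r)..r, f s) ≤ 2 * r * (a - r) ^ (-(2+α)) := by
    intro f hf hle
    have h := integral_mono_on (by linarith : -r ≤ r) hf intervalIntegrable_const hle
    rw [intervalIntegral.integral_const, smul_eq_mul] at h
    calc (∫ s in (-r)..r, f s) ≤ (r - -r) * (a - r) ^ (-(2+α)) := h
    _ = 2 * r * (a - r) ^ (-(2+α)) := by ring
  have hI1a : (∫ s in (-r)..r, (max (a - r) |s - b|) ^ (-(2+α)))
      ≤ 2 * r * (a - r) ^ (-(2+α)) :=
    const_bound _ int1 (fun s _ => rpow_anti hd (le_max_left _ _) he0)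
  have hI1b : (∫ s in (-r)..r, (max (a - r) |s - b|) ^ (-(2+α)))
      ≤ 4 * (a - r) ^ (-(1+α)) := I1_le hα hd hr hb0
  have hI3m : ∀ w : ℝ, (∫ s in (-r)..r, (max (a - s) w) ^ (-(2+α)))
      ≤ ∫ s in (-r)..r, (a - s) ^ (-(2+α)) := by
    intro w
    apply integral_mono_on (by linarith) (int3 w) intA
    intro s hs
    rw [Set.mem_Icc] at hs
    exact rpow_anti (by linarith : (0:ℝ) < a - s) (le_max_left _ _) he0
  have hI3c : ∀ w : ℝ, (∫ s in (-r)..r, (max (a - s) w) ^ (-(2+α)))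
      ≤ 2 * r * (a - r) ^ (-(2+α)) := by
    intro w
    apply const_bound _ (int3 w)
    intro s hs; rw [Set.mem_Icc] at hs
    exact rpow_anti hd (le_trans (by linarith) (le_max_left _ _)) he0
  have hI2v : (∫ s in (-r)..r, (a + r) ^ (-(2+α))) = 2 * r * (a + r) ^ (-(2+α)) := by
    rw [intervalIntegral.integral_const, smul_eq_mul]; ring
  have hrw : r / (a * (a - r) ^ (1 + α)) = r / a * (a - r) ^ (-(1+α)) := by
    rw [Real.rpow_neg hd.le, div_mul_eq_div_div, div_eq_mul_inv]
  -- nonnegativity of the four pieces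
  have n1 : 0 ≤ ∫ s in (-r)..r, (max (a - r) |s - b|) ^ (-(2+α)) :=
    integral_nonneg (by linarith) fun u _ =>
      Real.rpow_nonneg (le_trans hd.le (le_max_left _ _)) _
  have n2 : 0 ≤ ∫ s in (-r)..r, (a + r) ^ (-(2+α)) :=
    integral_nonneg (by linarith) fun u _ => Real.rpow_nonneg (by linarith) _
  have n3 : ∀ w : ℝ, 0 ≤ ∫ s in (-r)..r, (max (a - s) w) ^ (-(2+α)) := by
    intro w
    apply integral_nonneg (by linarith)
    intro u hu; rw [Set.mem_Icc] at hu
    exact Real.rpow_nonneg (le_trans (by linarith) (le_max_left _ _)) _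
  constructor
  · -- lower bound
    rw [hsplit]
    rcases le_total b r with hbr | hrb
    · -- near edge 1
      have hcontp : Continuous fun s : ℝ => ((a - r) + |s - b|) ^ (-(2+α)) := by
        apply Continuous.rpow_const
          (continuous_const.add ((continuous_id.sub continuous_const).abs))
        intro s
        exact Or.inl (by nlinarith [abs_nonneg (s - b)] : (0:ℝ) < (a - r) + |s - b|).ne'
      have mono1 : (∫ s in (-r)..r, ((a - r) + |s - b|) ^ (-(2+α)))
          ≤ ∫ s in (-r)..r, (max (a - r) |s - b|) ^ (-(2+α)) := by
        have ip0 : IntervalIntegrable (fun s => ((a - r) + |s - b|) ^ (-(2+α))) volume (-r) r :=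
          hcontp.intervalIntegrable _ _
        apply integral_mono_on (by linarith) ip0 int1
        intro s _
        exact rpow_anti (lt_of_lt_of_le hd (le_max_left _ _))
          (max_le (le_add_of_nonneg_right (abs_nonneg _)) (le_add_of_nonneg_left hd.le)) he0
      have ipa : IntervalIntegrable (fun s => ((a - r) + |s - b|) ^ (-(2+α))) volume (-r) b :=
        hcontp.intervalIntegrable _ _
      have ipb : IntervalIntegrable (fun s => ((a - r) + |s - b|) ^ (-(2+α))) volume b r :=
        hcontp.intervalIntegrable _ _
      have hadj := integral_add_adjacent_intervals ipa ipb
      have hp1 : (∫ s in (-r)..b, ((a - r) + |s - b|) ^ (-(2+α)))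
          = ((a - r) ^ (-(1+α)) - (a + b) ^ (-(1+α))) / (1 + α) := by
        have hcg : (∫ s in (-r)..b, ((a - r) + |s - b|) ^ (-(2+α)))
            = ∫ s in (-r)..b, (fun u : ℝ => u ^ (-(2+α))) ((a - r + b) - s) := by
          apply integral_congr; intro s hs
          rw [Set.uIcc_of_le (by linarith : -r ≤ b), Set.mem_Icc] at hs
          show ((a - r) + |s - b|) ^ (-(2+α)) = ((a - r + b) - s) ^ (-(2+α))
          rw [abs_sub_comm, abs_of_nonneg (by linarith : (0:ℝ) ≤ b - s)]
          ring_nf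
        rw [hcg, integral_comp_sub_left (fun u : ℝ => u ^ (-(2+α))) (a - r + b)]
        rw [show a - r + b - b = a - r by ring, show a - r + b - -r = a + b by ring]
        exact prim hα hd (by linarith)
      have hp2 : 0 ≤ ∫ s in b..r, ((a - r) + |s - b|) ^ (-(2+α)) :=
        integral_nonneg hbr fun u _ =>
          Real.rpow_nonneg (add_nonneg hd.le (abs_nonneg _)) _
      have hlow := lower_frac hα hr hra (by linarith : a ≤ a + b)
      linarith [n2, n3 |r - b|, n3 (r + b)]
    · -- near edge 3
      have hI3eq : (∫ s in (-r)..r, (max (a - s) |r - b|) ^ (-(2+α)))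
          = ∫ s in (-r)..r, (a - s) ^ (-(2+α)) := by
        apply integral_congr; intro s hs
        rw [Set.uIcc_of_le (by linarith : -r ≤ r), Set.mem_Icc] at hs
        show (max (a - s) |r - b|) ^ (-(2+α)) = (a - s) ^ (-(2+α))
        rw [show |r - b| = b - r from by
            rw [abs_sub_comm, abs_of_nonneg (by linarith : (0:ℝ) ≤ b - r)],
          max_eq_left (by linarith)]
      have hlow := lower_frac hα hr hra (by linarith : a ≤ a + r)
      linarith [n1, n2, n3 (r + b), hIa, hI3eq, hlow]
  · -- upper bound
    rw [hsplit, hI2v, hrw]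
    have hI2b : a * (2 * r * (a + r) ^ (-(2+α))) ≤ 2 * r * (a - r) ^ (-(1+α)) := by
      have k1 := rpow_shift (by linarith : (0:ℝ) < a + r) α
      have k2 : (a + r) ^ (-(1+α)) ≤ (a - r) ^ (-(1+α)) := rpow_anti hd (by linarith) (by linarith)
      have k3 : 0 ≤ (a + r) ^ (-(2+α)) := Real.rpow_nonneg (by linarith) _
      have k4 : a * (a + r) ^ (-(2+α)) ≤ (a - r) ^ (-(1+α)) := by nlinarith
      nlinarith [mul_le_mul_of_nonneg_left k4 (by positivity : (0:ℝ) ≤ 2 * r)]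
    rw [show 12 * (r / a * (a - r) ^ (-(1+α))) = 12 * r * (a - r) ^ (-(1+α)) / a by ring,
      le_div_iff₀ ha]
    exact upper_arith hr hra (rpow_shift hd α) (Real.rpow_nonneg hd.le _)
      (Real.rpow_nonneg hd.le _) hI1a hI1b rfl hI2b
      (hI3c |r - b|) ((hI3m |r - b|).trans hIaD)
      (hI3c (r + b)) ((hI3m (r + b)).trans hIaD)

end JsqProof

/-- two-sided bounds on `J_r(x)` for `‖x‖_∞ > r`. -/
theorem Jsq_bounds_outside (α : ℝ) (hα : 0 < α) :
    ∀ r : ℝ, 0 < r → ∀ x : ℝ × ℝ, r < ‖x‖ →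
      (1 + α)⁻¹ * (r / (‖x‖ * (‖x‖ - r) ^ (1 + α))) ≤ Jsq α r x ∧
      Jsq α r x ≤ 12 * (r / (‖x‖ * (‖x‖ - r) ^ (1 + α))) := by
  intro r hr x hx
  obtain ⟨p, q⟩ := x
  have habs := JsqProof.Jsq_abs α r p q hr hx
  rcases le_total |q| |p| with h | h
  · have hnorm : ‖((p, q) : ℝ × ℝ)‖ = |p| := by
      rw [JsqProof.norm_pair, max_eq_left h]
    rw [habs, hnorm]
    exact JsqProof.core hα hr (abs_nonneg q) h (by rwa [hnorm] at hx)
  · have hnorm : ‖((p, q) : ℝ × ℝ)‖ = |q| := by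
      rw [JsqProof.norm_pair, max_eq_right h]
    rw [habs, JsqProof.Jsq_swap α r |q| |p|, hnorm]
    exact JsqProof.core hα hr (abs_nonneg p) h (by rwa [hnorm] at hx)
end

section
/- Let d ∈ {1,2} and α ∈ (0,2]. Define p : ℤ^d → ℝ by p(x) = c·(1 + |x|^{d+α})^{−1}, with |·| the Euclidean norm and c > 0 the constant making Σ_{x∈ℤ^d} p(x) = 1, and φ(θ) = Σ_{x∈ℤ^d} p(x)·cos(x·θ). Then there exist constants c₁ > 0, C < ∞ and n₀ ∈ ℕ such that for all integers n ≥ n₀, with the truncated kernel Q_n(x) := p(x)·1_{{|x| ≤ c₁·n}}, the series Σ_{k=0}^∞ Q_n^{*k}(0) converges and satisfies Σ_{k=0}^∞ Q_n^{*k}(0) ≤ C·∫_{[−π,π]^d} dθ / (n^{−α} + 1 − φ(θ)), where Q_n^{*k} denotes the k-fold convolution of Q_n on ℤ^d (with Q_n^{*0} = δ_0 the indicator of 0). -/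
open MeasureTheory

/-- Euclidean norm of a point of `ℤ^d`. -/
noncomputable def znorm (d : ℕ) (x : Fin d → ℤ) : ℝ :=
  Real.sqrt (∑ i, ((x i : ℝ)) ^ 2)

/-- The jump probability `p(x) = c (1 + |x|^{d+α})⁻¹` on `ℤ^d`. -/
noncomputable def jumpP (d : ℕ) (α c : ℝ) (x : Fin d → ℤ) : ℝ :=
  c / (1 + znorm d x ^ ((d : ℝ) + α))

/-- The characteristic function `φ(θ) = Σ_{x∈ℤ^d} p(x) cos(x·θ)`. -/
noncomputable def charFn (d : ℕ) (α c : ℝ) (θ : EuclideanSpace ℝ (Fin d)) : ℝ :=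
  ∑' x : Fin d → ℤ, jumpP d α c x * Real.cos (∑ i, (x i : ℝ) * θ i)

/-- Convolution of two kernels on `ℤ^d`. -/
noncomputable def convZ (d : ℕ) (Q R : (Fin d → ℤ) → ℝ) (x : Fin d → ℤ) : ℝ :=
  ∑' y : Fin d → ℤ, Q y * R (x - y)

/-- `k`-fold convolution power of a kernel on `ℤ^d`, with `Q^{*0} = δ_0`. -/
noncomputable def convPow (d : ℕ) (Q : (Fin d → ℤ) → ℝ) : ℕ → (Fin d → ℤ) → ℝ
  | 0 => fun x => if x = 0 then 1 else 0
  | k + 1 => convZ d (convPow d Q k) Q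

/-- The truncated kernel `Q_n(x) = p(x)·1_{|x| ≤ c₁ n}`. -/
noncomputable def truncP (d : ℕ) (α c c₁ : ℝ) (n : ℕ) (x : Fin d → ℤ) : ℝ :=
  if znorm d x ≤ c₁ * n then jumpP d α c x else 0

/-!
Identify a finitely supported kernel `Q` on `ℤ^d` with an element of the group algebra
`ℝ[ℤ^d]`: then `Q^{*k}` is the `k`-th power of `Q`, and its Fourier transform is `ψ^k`, where
`ψ(θ) = Σ_x Q(x) e^{i x·θ}`. Fourier inversion on `[-π, π]^d` and the geometric series give
`Σ_k Q^{*k}(0) = (2π)^{-d} ∫ Re (1 - ψ)⁻¹` as soon as `Σ_x |Q(x)| < 1`.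

Take `c₁ = 1`, so that `Q_n = p · 1_S` with `S` the ball of radius `n`. As `Re (1/z) ≤ 1/Re z`,
it suffices to bound `n^{-α} + 1 - φ` by a multiple of `1 - Re ψ = Σ_x (p(x) - Q_n(x) cos(x·θ))`.
Termwise `p (1 - cos) ≤ 2 (p - Q_n cos)`, and the removed mass `t_n = Σ_{x ∉ S} p(x)` is at most
`1 - Re ψ`. Finally `n^{-α} ≲ t_n`: each of the `n^d` points of `[n+1, 2n]^d` lies outside `S`
and carries mass `≳ n^{-d-α}`.
-/

open Real

section Lattice

variable {d : ℕ}

lemma znorm_nonneg (x : Fin d → ℤ) : 0 ≤ znorm d x := Real.sqrt_nonneg _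

lemma abs_le_znorm (x : Fin d → ℤ) (i : Fin d) : |(x i : ℝ)| ≤ znorm d x := by
  rw [← Real.sqrt_sq_eq_abs]
  exact Real.sqrt_le_sqrt (Finset.single_le_sum (f := fun j => (x j : ℝ) ^ 2)
    (fun j _ => sq_nonneg _) (Finset.mem_univ i))

lemma znorm_le_of_forall_abs_le {x : Fin d → ℤ} {r : ℝ} (hr : 0 ≤ r)
    (h : ∀ i, |(x i : ℝ)| ≤ r) : znorm d x ≤ d * r := by
  have hd : (d : ℝ) ≤ d * d := by
    rcases Nat.eq_zero_or_pos d with rfl | hd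
    · simp
    · exact le_mul_of_one_le_left (Nat.cast_nonneg d) (by exact_mod_cast hd)
  calc znorm d x ≤ Real.sqrt ((d * r) ^ 2) := by
        refine Real.sqrt_le_sqrt ?_
        calc ∑ i, (x i : ℝ) ^ 2 ≤ ∑ _i : Fin d, r ^ 2 :=
              Finset.sum_le_sum fun i _ => sq_le_sq' (abs_le.mp (h i)).1 (abs_le.mp (h i)).2
          _ = d * r ^ 2 := by simp
          _ ≤ (d * r) ^ 2 := by nlinarith [sq_nonneg r]
    _ = d * r := Real.sqrt_sq (by positivity)

lemma finite_setOf_znorm_le (r : ℝ) : {x : Fin d → ℤ | znorm d x ≤ r}.Finite := by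
  refine (Set.finite_Icc (fun _ => -⌈r⌉) fun _ => ⌈r⌉).subset fun x hx =>
    ⟨fun i => ?_, fun i => ?_⟩ <;>
  have h := abs_le.mp ((abs_le_znorm x i).trans hx) <;> have hr := Int.le_ceil r
  · have : (-⌈r⌉ : ℝ) ≤ x i := by linarith [h.1]
    exact_mod_cast this
  · exact_mod_cast h.2.trans hr

variable {α c : ℝ}

lemma jumpP_nonneg (hc : 0 ≤ c) (x : Fin d → ℤ) : 0 ≤ jumpP d α c x :=
  div_nonneg hc (by have := Real.rpow_nonneg (znorm_nonneg x) (d + α); linarith)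

lemma continuous_charFn (hp : Summable (jumpP d α c)) : Continuous (charFn d α c) :=
  continuous_tsum (fun x => continuous_const.mul (continuous_cos.comp (by fun_prop))) hp.abs
    fun x θ => by
      rw [norm_mul, Real.norm_eq_abs]
      exact mul_le_of_le_one_right (abs_nonneg _) (abs_cos_le_one _)

lemma truncP_eq_indicator (α c c₁ : ℝ) (n : ℕ) :
    truncP d α c c₁ n = {x | znorm d x ≤ c₁ * n}.indicator (jumpP d α c) := by
  funext x
  simp only [truncP, Set.indicator_apply, Set.mem_ofPred_eq]

lemma div_two_mul_rpow_le_jumpP (hs : 0 ≤ d + α) (hc : 0 ≤ c) {R : ℝ} (hR : 1 ≤ R)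
    {x : Fin d → ℤ} (hx : znorm d x ≤ R) : c / (2 * R ^ ((d : ℝ) + α)) ≤ jumpP d α c x := by
  have h1 : 1 ≤ R ^ ((d : ℝ) + α) := Real.one_le_rpow hR hs
  have h2 : znorm d x ^ ((d : ℝ) + α) ≤ R ^ ((d : ℝ) + α) :=
    Real.rpow_le_rpow (znorm_nonneg x) hx hs
  exact div_le_div_of_nonneg_left hc
    (by linarith [Real.rpow_nonneg (znorm_nonneg x) ((d : ℝ) + α)]) (by linarith)

lemma le_tsum_jumpP_indicator_compl (hd : d ≠ 0) (hs : 0 ≤ d + α) (hc : 0 ≤ c)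
    (hp : Summable (jumpP d α c)) {n : ℕ} (hn : 1 ≤ n) :
    c / (2 * (2 * d) ^ ((d : ℝ) + α)) * (n : ℝ) ^ (-α) ≤
      ∑' x, {x : Fin d → ℤ | znorm d x ≤ n}ᶜ.indicator (jumpP d α c) x := by
  set s : ℝ := d + α
  set B : Finset (Fin d → ℤ) := Fintype.piFinset fun _ => Finset.Icc ((n : ℤ) + 1) (2 * n)
  have hn' : (1 : ℝ) ≤ n := by exact_mod_cast hn
  have hd' : (1 : ℝ) ≤ d := by exact_mod_cast Nat.one_le_iff_ne_zero.mpr hd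
  have hcoord {x} (hx : x ∈ B) (i : Fin d) : (n : ℝ) + 1 ≤ x i ∧ (x i : ℝ) ≤ 2 * n := by
    have := Finset.mem_Icc.mp (Fintype.mem_piFinset.mp hx i)
    exact ⟨by exact_mod_cast this.1, by exact_mod_cast this.2⟩
  have hcard : (B.card : ℝ) = (n : ℝ) ^ (d : ℝ) := by
    have hIcc : (2 * (n : ℤ)).toNat - n = n := by omega
    simp [B, Fintype.card_piFinset, Int.card_Icc, hIcc, Real.rpow_natCast]
  have hout {x} (hx : x ∈ B) : x ∈ {x : Fin d → ℤ | znorm d x ≤ n}ᶜ := by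
    have h0 := hcoord hx ⟨0, Nat.pos_of_ne_zero hd⟩
    have := (le_abs_self _).trans (abs_le_znorm x ⟨0, Nat.pos_of_ne_zero hd⟩)
    simp only [Set.mem_compl_iff, Set.mem_ofPred_eq, not_le]
    linarith
  have hmass {x} (hx : x ∈ B) : c / (2 * (2 * d * n) ^ s) ≤ jumpP d α c x := by
    refine div_two_mul_rpow_le_jumpP hs hc (by nlinarith) ?_
    calc znorm d x ≤ d * (2 * n) := znorm_le_of_forall_abs_le (by positivity) fun i =>
          abs_le.mpr ⟨by linarith [hcoord hx i], (hcoord hx i).2⟩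
      _ = 2 * d * n := by ring
  calc c / (2 * (2 * d) ^ s) * (n : ℝ) ^ (-α) = B.card * (c / (2 * (2 * d * n) ^ s)) := by
        have hsplit : (2 * d * n : ℝ) ^ s = (2 * d) ^ s * ((n : ℝ) ^ (d : ℝ) * (n : ℝ) ^ α) := by
          rw [Real.mul_rpow (by positivity) (by positivity),
            Real.rpow_add (by positivity : (0 : ℝ) < n)]
        rw [hcard, hsplit, Real.rpow_neg (by positivity)]
        field_simp
    _ ≤ ∑ x ∈ B, jumpP d α c x := by
        rw [← nsmul_eq_mul]
        exact Finset.card_nsmul_le_sum B _ _ fun x hx => hmass hx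
    _ = ∑ x ∈ B, {x : Fin d → ℤ | znorm d x ≤ n}ᶜ.indicator (jumpP d α c) x :=
        Finset.sum_congr rfl fun x hx => (Set.indicator_of_mem (hout hx) _).symm
    _ ≤ _ := (hp.indicator _).sum_le_tsum B fun x _ =>
        Set.indicator_nonneg (fun x _ => jumpP_nonneg hc x) x

end Lattice

section RestrictedKernel

variable {ι : Type*} {p : ι → ℝ}

lemma Summable.mul_cos (hp : Summable p) (w : ι → ℝ) : Summable fun x => p x * cos (w x) :=
  hp.abs.of_norm_bounded fun x => by
    rw [norm_mul, Real.norm_eq_abs]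
    exact mul_le_of_le_one_right (abs_nonneg _) (abs_cos_le_one _)

lemma tsum_mul_cos_le (hp : Summable p) (hp0 : 0 ≤ p) (w : ι → ℝ) :
    ∑' x, p x * cos (w x) ≤ ∑' x, p x :=
  (hp.mul_cos w).tsum_le_tsum (fun x => mul_le_of_le_one_right (hp0 x) (cos_le_one _)) hp

lemma tail_add_one_sub_tsum_mul_cos_le (hp : Summable p) (hp0 : 0 ≤ p) (hp1 : ∑' x, p x = 1)
    (S : Set ι) (w : ι → ℝ) {l : ℝ} (hl : 0 ≤ l) :
    l * ∑' x, Sᶜ.indicator p x + (1 - ∑' x, p x * cos (w x)) ≤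
      (l + 2) * (1 - ∑' x, S.indicator p x * cos (w x)) := by
  have hS : Summable (S.indicator p) := hp.indicator S
  rw [← hp1, ← (hp.indicator Sᶜ).tsum_mul_left, ← hp.tsum_sub (hp.mul_cos w),
    ← hp.tsum_sub (hS.mul_cos w), ← tsum_mul_left, ← ((hp.indicator Sᶜ).mul_left l).tsum_add
      (hp.sub (hp.mul_cos w))]
  refine ((hp.indicator Sᶜ).mul_left l |>.add (hp.sub (hp.mul_cos w))).tsum_le_tsum
    (fun x => ?_) ((hp.sub (hS.mul_cos w)).mul_left _)
  have hpx : 0 ≤ p x := hp0 x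
  have hdefect : 0 ≤ p x * (1 - cos (w x)) := mul_nonneg hpx (sub_nonneg.2 (cos_le_one _))
  by_cases hx : x ∈ S
  · simp only [Set.indicator_of_mem hx, Set.indicator_of_notMem (Set.notMem_compl_iff.mpr hx)]
    nlinarith [mul_nonneg hl hdefect]
  · simp only [Set.indicator_of_notMem hx, Set.indicator_of_mem (Set.mem_compl hx)]
    nlinarith [mul_nonneg hpx (by linarith [neg_one_le_cos (w x)] : 0 ≤ 1 + cos (w x))]

end RestrictedKernel

lemma Finsupp.sum_eq_tsum {ι : Type*} (f : ι →₀ ℝ) {g : ι → ℝ → ℝ} (hg : ∀ x, g x 0 = 0) :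
    f.sum g = ∑' x, g x (f x) :=
  (tsum_eq_sum fun x hx => by rw [Finsupp.notMem_support_iff.mp hx, hg]).symm

lemma Complex.inv_re_mem_Icc {z : ℂ} (hz : 0 < z.re) : z⁻¹.re ∈ Set.Icc 0 z.re⁻¹ := by
  have hsq : 0 < z.re * z.re := mul_pos hz hz
  have hnorm := Complex.re_sq_le_normSq z
  rw [Complex.inv_re]
  refine ⟨div_nonneg hz.le (hsq.trans_le hnorm).le, ?_⟩
  calc z.re / Complex.normSq z ≤ z.re / (z.re * z.re) := by gcongr
    _ = z.re⁻¹ := by field_simp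

noncomputable def latticeChar {d : ℕ} (θ : EuclideanSpace ℝ (Fin d)) :
    Multiplicative (Fin d → ℤ) →* ℂ where
  toFun x := Complex.exp ((∑ i, (x.toAdd i : ℝ) * θ i : ℝ) * Complex.I)
  map_one' := by simp
  map_mul' x y := by
    rw [← Complex.exp_add, ← add_mul, ← Complex.ofReal_add, ← Finset.sum_add_distrib]
    simp [add_mul]

noncomputable def latticeFourier {d : ℕ} (F : AddMonoidAlgebra ℝ (Fin d → ℤ))
    (θ : EuclideanSpace ℝ (Fin d)) : ℂ :=
  AddMonoidAlgebra.lift ℝ ℂ (Fin d → ℤ) (latticeChar θ) F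

def torusBox (d : ℕ) : Set (EuclideanSpace ℝ (Fin d)) := {θ | ∀ i, θ i ∈ Set.Icc (-π) π}

section Fourier

variable {d : ℕ}

lemma latticeChar_apply (θ : EuclideanSpace ℝ (Fin d)) (x : Fin d → ℤ) :
    latticeChar θ (.ofAdd x) = Complex.exp ((∑ i, (x i : ℝ) * θ i : ℝ) * Complex.I) := rfl

lemma continuous_latticeChar_apply (x : Fin d → ℤ) :
    Continuous fun θ : EuclideanSpace ℝ (Fin d) => latticeChar θ (.ofAdd x) := by
  simp only [latticeChar_apply]
  fun_prop

lemma setIntegral_Icc_exp_int_mul_I (m : ℤ) :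
    ∫ t in Set.Icc (-π) π, Complex.exp (((m : ℝ) * t : ℝ) * Complex.I) =
      if m = 0 then ((2 * π : ℝ) : ℂ) else 0 := by
  rw [integral_Icc_eq_integral_Ioc, ← intervalIntegral.integral_of_le (by linarith [pi_pos])]
  split_ifs with hm
  · simp [hm, two_mul]
  · have hmI : (m : ℂ) * Complex.I ≠ 0 := by simp [hm]
    have hper : Complex.exp (m * Complex.I * π) = Complex.exp (m * Complex.I * (-π : ℝ)) := by
      rw [← mul_one (Complex.exp (_ * (-π : ℝ))), ← Complex.exp_int_mul_two_pi_mul_I m,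
        ← Complex.exp_add]
      push_cast
      ring_nf
    simp_rw [Complex.ofReal_mul, Complex.ofReal_intCast, mul_right_comm _ _ Complex.I]
    rw [integral_exp_mul_complex hmI, hper, sub_self, zero_div]

lemma isCompact_torusBox : IsCompact (torusBox d) := by
  convert (isCompact_univ_pi fun _ : Fin d => isCompact_Icc (a := -π) (b := π)).image
    (PiLp.continuous_toLp 2 fun _ : Fin d => ℝ)
  ext θ
  exact ⟨fun h => ⟨θ.ofLp, fun i _ => h i, rfl⟩, by rintro ⟨y, hy, rfl⟩ i; exact hy i trivial⟩

lemma setIntegral_torusBox_eq_setIntegral_pi {E : Type*} [NormedAddCommGroup E]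
    [NormedSpace ℝ E] (f : EuclideanSpace ℝ (Fin d) → E) :
    ∫ θ in torusBox d, f θ = ∫ y in Set.univ.pi fun _ : Fin d => Set.Icc (-π) π,
      f (WithLp.toLp 2 y) := by
  rw [← (PiLp.volume_preserving_toLp (Fin d)).setIntegral_preimage_emb
    (MeasurableEquiv.toLp 2 (Fin d → ℝ)).measurableEmbedding]
  congr
  ext y
  simp [torusBox, Pi.le_def, forall_and]

lemma setIntegral_torusBox_latticeChar (x : Fin d → ℤ) :
    ∫ θ in torusBox d, latticeChar θ (.ofAdd x) =
      if x = 0 then (((2 * π) ^ d : ℝ) : ℂ) else 0 := by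
  have hprod (y : Fin d → ℝ) : latticeChar (WithLp.toLp 2 y) (.ofAdd x) =
      ∏ i, Complex.exp (((x i : ℝ) * y i : ℝ) * Complex.I) := by
    rw [latticeChar_apply, Complex.ofReal_sum, Finset.sum_mul, Complex.exp_sum]
  simp_rw [setIntegral_torusBox_eq_setIntegral_pi, hprod]
  rw [volume_pi, Measure.restrict_pi_pi,
    integral_fintype_prod_eq_prod fun i t => Complex.exp (((x i : ℝ) * t : ℝ) * Complex.I)]
  simp_rw [setIntegral_Icc_exp_int_mul_I, Finset.prod_ite_zero, Finset.prod_const,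
    Finset.card_univ, Fintype.card_fin, Finset.mem_univ, true_implies, funext_iff, Pi.zero_apply,
    Complex.ofReal_pow]

variable (F : AddMonoidAlgebra ℝ (Fin d → ℤ))

lemma latticeFourier_eq_sum (θ : EuclideanSpace ℝ (Fin d)) :
    latticeFourier F θ = F.coeff.sum fun x r => r * latticeChar θ (.ofAdd x) := by
  rw [latticeFourier, AddMonoidAlgebra.lift_apply]
  rfl

lemma latticeFourier_pow (k : ℕ) (θ : EuclideanSpace ℝ (Fin d)) :
    latticeFourier (F ^ k) θ = latticeFourier F θ ^ k :=
  map_pow _ F k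

lemma norm_latticeFourier_le (θ : EuclideanSpace ℝ (Fin d)) :
    ‖latticeFourier F θ‖ ≤ F.coeff.sum fun _ r => |r| := by
  rw [latticeFourier_eq_sum]
  refine (norm_sum_le _ _).trans_eq (Finset.sum_congr rfl fun x _ => ?_)
  rw [norm_mul, latticeChar_apply, Complex.norm_exp_ofReal_mul_I, mul_one, Complex.norm_real,
    Real.norm_eq_abs]

lemma re_latticeFourier (θ : EuclideanSpace ℝ (Fin d)) :
    (latticeFourier F θ).re = F.coeff.sum fun x r => r * cos (∑ i, (x i : ℝ) * θ i) := by
  rw [latticeFourier_eq_sum, Finsupp.sum, Complex.re_sum]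
  refine Finset.sum_congr rfl fun x _ => ?_
  rw [latticeChar_apply, Complex.re_ofReal_mul, Complex.exp_ofReal_mul_I_re]

lemma continuous_latticeFourier : Continuous (latticeFourier F) := by
  rw [funext (latticeFourier_eq_sum F)]
  exact continuous_finsetSum _ fun x _ => continuous_const.mul (continuous_latticeChar_apply x)

lemma setIntegral_torusBox_latticeFourier :
    ∫ θ in torusBox d, latticeFourier F θ = (((2 * π) ^ d : ℝ) : ℂ) * F.coeff 0 := by
  simp_rw [latticeFourier_eq_sum, Finsupp.sum]
  have hint (x : Fin d → ℤ) : IntegrableOn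
      (fun θ => (F.coeff x : ℂ) * latticeChar θ (.ofAdd x)) (torusBox d) :=
    (continuous_const.mul (continuous_latticeChar_apply x)).continuousOn.integrableOn_compact
      isCompact_torusBox
  rw [integral_finsetSum _ fun x _ => hint x]
  simp_rw [integral_const_mul, setIntegral_torusBox_latticeChar, mul_ite, mul_zero,
    Finset.sum_ite_eq', Finsupp.mem_support_iff, ite_not]
  split_ifs with h <;> simp [h, mul_comm]

lemma convPow_coeff_eq_coeff_pow (k : ℕ) : convPow d F.coeff k = (F ^ k).coeff := by
  induction k with
  | zero =>
    funext x
    simp [convPow, AddMonoidAlgebra.one_def, Finsupp.single_apply, eq_comm]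
  | succ k ih =>
    funext x
    rw [convPow, ih, pow_succ, AddMonoidAlgebra.coeff_mul_apply_left, convZ, Finsupp.sum,
      tsum_eq_sum fun y hy => by rw [Finsupp.notMem_support_iff.mp hy, zero_mul]]
    simp_rw [neg_add_eq_sub]

lemma hasSum_coeff_pow_zero (hF : (F.coeff.sum fun _ r => |r|) < 1) :
    HasSum (fun k => (F ^ k).coeff 0)
      (((2 * π) ^ d)⁻¹ * ∫ θ in torusBox d, ((1 - latticeFourier F θ)⁻¹).re) := by
  set s := F.coeff.sum fun _ r => |r|
  have hs0 : 0 ≤ s := Finset.sum_nonneg fun _ _ => abs_nonneg _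
  have hψ (θ : EuclideanSpace ℝ (Fin d)) : ‖latticeFourier F θ‖ < 1 :=
    (norm_latticeFourier_le F θ).trans_lt hF
  have hgeom : HasSum (fun k => ∫ θ in torusBox d, latticeFourier F θ ^ k)
      (∫ θ in torusBox d, (1 - latticeFourier F θ)⁻¹) :=
    hasSum_integral_of_dominated_convergence (fun k _ => s ^ k)
      (fun k => ((continuous_latticeFourier F).pow k).aestronglyMeasurable)
      (fun k => ae_of_all _ fun θ => by
        rw [norm_pow]
        exact pow_le_pow_left₀ (norm_nonneg _) (norm_latticeFourier_le F θ) k)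
      (ae_of_all _ fun _ => summable_geometric_of_lt_one hs0 hF)
      (integrableOn_const isCompact_torusBox.measure_lt_top.ne)
      (ae_of_all _ fun θ => hasSum_geometric_of_norm_lt_one (hψ θ))
  simp_rw [← latticeFourier_pow, setIntegral_torusBox_latticeFourier] at hgeom
  have hint : IntegrableOn (fun θ => (1 - latticeFourier F θ)⁻¹) (torusBox d) :=
    ((continuous_const.sub (continuous_latticeFourier F)).inv₀ fun θ =>
      sub_ne_zero.mpr fun h => by simpa [← h] using hψ θ).continuousOn.integrableOn_compact
      isCompact_torusBox
  have hpos : (2 * π) ^ d ≠ 0 := by positivity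
  rw [show ∫ θ in torusBox d, ((1 - latticeFourier F θ)⁻¹).re =
      (∫ θ in torusBox d, (1 - latticeFourier F θ)⁻¹).re from integral_re hint]
  simpa only [Complex.re_ofReal_mul, Complex.ofReal_re, inv_mul_cancel_left₀ hpos] using
    (Complex.hasSum_re hgeom).mul_left ((2 * π) ^ d)⁻¹

end Fourier

section RestrictedFourier

variable {d : ℕ} {p : (Fin d → ℤ) → ℝ} {S : Set (Fin d → ℤ)}
  {F : AddMonoidAlgebra ℝ (Fin d → ℤ)}

lemma sum_abs_coeff_eq_one_sub_tsum_indicator_compl (hp : Summable p) (hp0 : 0 ≤ p)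
    (hp1 : ∑' x, p x = 1) (hF : ⇑F.coeff = S.indicator p) :
    (F.coeff.sum fun _ r => |r|) = 1 - ∑' x, Sᶜ.indicator p x := by
  rw [Finsupp.sum_eq_tsum _ fun _ => abs_zero, hF, ← hp1, eq_sub_iff_add_eq,
    ← (hp.indicator S).abs.tsum_add (hp.indicator Sᶜ)]
  refine tsum_congr fun x => ?_
  rw [abs_of_nonneg (Set.indicator_nonneg (fun x _ => hp0 x) x),
    Set.indicator_self_add_compl_apply]

lemma inv_one_sub_latticeFourier_re_mem_Icc (hp : Summable p) (hp0 : 0 ≤ p)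
    (hp1 : ∑' x, p x = 1) (hF : ⇑F.coeff = S.indicator p) {ε l : ℝ} (hε : 0 < ε) (hl : 0 ≤ l)
    (htail : ε ≤ l * ∑' x, Sᶜ.indicator p x) (θ : EuclideanSpace ℝ (Fin d)) :
    ((1 - latticeFourier F θ)⁻¹).re ∈
      Set.Icc 0 ((l + 2) * (1 / (ε + 1 - ∑' x, p x * cos (∑ i, (x i : ℝ) * θ i)))) := by
  set w : (Fin d → ℤ) → ℝ := fun x => ∑ i, (x i : ℝ) * θ i
  have hre : (1 - latticeFourier F θ).re = 1 - ∑' x, S.indicator p x * cos (w x) := by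
    rw [Complex.sub_re, Complex.one_re, re_latticeFourier,
      Finsupp.sum_eq_tsum (g := fun x r => r * cos (w x)) _ fun _ => zero_mul _, hF]
  have hφ : 0 ≤ 1 - ∑' x, p x * cos (w x) := sub_nonneg.2 (hp1 ▸ tsum_mul_cos_le hp hp0 w)
  have hkey := tail_add_one_sub_tsum_mul_cos_le hp hp0 hp1 S w hl
  have hD : 0 < ε + 1 - ∑' x, p x * cos (w x) := by linarith
  have hz : 0 < (1 - latticeFourier F θ).re := by
    rw [hre]
    nlinarith
  obtain ⟨h0, h1⟩ := Complex.inv_re_mem_Icc hz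
  refine ⟨h0, h1.trans ?_⟩
  rw [← one_div, mul_one_div, div_le_div_iff₀ hz hD, hre]
  linarith

end RestrictedFourier

lemma integrableOn_one_div_add_one_sub_charFn {d : ℕ} {α c : ℝ} (hp : Summable (jumpP d α c))
    (hc : 0 ≤ c) (hnorm : ∑' x, jumpP d α c x = 1) {ε : ℝ} (hε : 0 < ε) :
    IntegrableOn (fun θ => 1 / (ε + 1 - charFn d α c θ)) (torusBox d) := by
  have hφ (θ : EuclideanSpace ℝ (Fin d)) : charFn d α c θ ≤ 1 :=
    hnorm ▸ tsum_mul_cos_le hp (jumpP_nonneg hc) _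
  exact (continuous_const.div (continuous_const.sub (continuous_charFn hp)) fun θ =>
    (by linarith [hφ θ] : 0 < ε + 1 - charFn d α c θ).ne').continuousOn.integrableOn_compact
    isCompact_torusBox

theorem truncated_green_function_bound_general (d : ℕ) (hd : d = 1 ∨ d = 2)
    (α : ℝ) (hα0 : 0 < α)
    (c : ℝ) (hc : 0 < c)
    (hnorm : ∑' x : Fin d → ℤ, jumpP d α c x = 1) :
    ∃ c₁ : ℝ, 0 < c₁ ∧ ∃ C : ℝ, ∃ n₀ : ℕ, ∀ n : ℕ, n₀ ≤ n →
      Summable (fun k : ℕ => convPow d (truncP d α c c₁ n) k 0) ∧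
      ∑' k : ℕ, convPow d (truncP d α c c₁ n) k 0 ≤
        C * ∫ θ in {θ : EuclideanSpace ℝ (Fin d) | ∀ i, θ i ∈ Set.Icc (-Real.pi) Real.pi},
          1 / ((n : ℝ) ^ (-α) + 1 - charFn d α c θ) := by
  have hp : Summable (jumpP d α c) := by
    by_contra h
    exact zero_ne_one (tsum_eq_zero_of_not_summable h ▸ hnorm)
  have hp0 : 0 ≤ jumpP d α c := jumpP_nonneg hc.le
  set κ := c / (2 * (2 * d) ^ ((d : ℝ) + α))
  have hκ : 0 < κ := by rcases hd with rfl | rfl <;> positivity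
  refine ⟨1, one_pos, ((2 * π) ^ d)⁻¹ * (κ⁻¹ + 2), 1, fun n hn => ?_⟩
  set S := {x : Fin d → ℤ | znorm d x ≤ 1 * n}
  let F : AddMonoidAlgebra ℝ (Fin d → ℤ) := .ofCoeff <| .ofSupportFinite
    (S.indicator (jumpP d α c)) ((finite_setOf_znorm_le _).subset Set.support_indicator_subset)
  have hF : ⇑F.coeff = S.indicator (jumpP d α c) := Finsupp.ofSupportFinite_coe
  have hε : 0 < (n : ℝ) ^ (-α) := by positivity
  have htail : (n : ℝ) ^ (-α) ≤ κ⁻¹ * ∑' x, Sᶜ.indicator (jumpP d α c) x := by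
    rw [le_inv_mul_iff₀ hκ]
    simpa only [S, one_mul] using
      le_tsum_jumpP_indicator_compl (by omega) (by positivity) hc.le hp hn
  have hgreen := hasSum_coeff_pow_zero F <| by
    rw [sum_abs_coeff_eq_one_sub_tsum_indicator_compl hp hp0 hnorm hF]
    linarith [pos_of_mul_pos_right (hε.trans_le htail) (inv_nonneg.2 hκ.le)]
  have hbound := inv_one_sub_latticeFourier_re_mem_Icc hp hp0 hnorm hF hε
    (inv_nonneg.2 hκ.le) htail
  rw [truncP_eq_indicator, ← hF]
  simp_rw [convPow_coeff_eq_coeff_pow]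
  refine ⟨hgreen.summable, ?_⟩
  rw [hgreen.tsum_eq, mul_assoc]
  refine mul_le_mul_of_nonneg_left ?_ (by positivity)
  rw [← integral_const_mul]
  exact integral_mono_of_nonneg (ae_of_all _ fun θ => (hbound θ).1)
    ((integrableOn_one_div_add_one_sub_charFn hp hc.le hnorm hε).const_mul _)
    (ae_of_all _ fun θ => (hbound θ).2)

/-- the truncated Green function at the origin is bounded by
`C ∫_{[−π,π]^d} dθ/(n^{−α} + 1 − φ(θ))`. -/
theorem truncated_green_function_bound (d : ℕ) (hd : d = 1 ∨ d = 2)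
    (α : ℝ) (hα0 : 0 < α) (hα2 : α ≤ 2)
    (c : ℝ) (hc : 0 < c)
    (hnorm : ∑' x : Fin d → ℤ, jumpP d α c x = 1) :
    ∃ c₁ : ℝ, 0 < c₁ ∧ ∃ C : ℝ, ∃ n₀ : ℕ, ∀ n : ℕ, n₀ ≤ n →
      Summable (fun k : ℕ => convPow d (truncP d α c c₁ n) k 0) ∧
      ∑' k : ℕ, convPow d (truncP d α c c₁ n) k 0 ≤
        C * ∫ θ in {θ : EuclideanSpace ℝ (Fin d) | ∀ i, θ i ∈ Set.Icc (-Real.pi) Real.pi},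
          1 / ((n : ℝ) ^ (-α) + 1 - charFn d α c θ) :=
  truncated_green_function_bound_general d hd α hα0 c hc hnorm
end
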